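/- arXiv:1304.2296 — 2 statements merged into one kernel-verified Lean document; each statement's English description precedes it below -/
import Mathlib

section
/- Let w ∈ C²(cl(𝔹₁)) be radially symmetric with ∂_ν w = 0 on ∂𝔹₁, and suppose there is r₀ ∈ (0,1) such that Δw < 0 on cl(𝔹₁)∖cl(𝔹_{r₀}) and Δw > 0 on 𝔹_{r₀}∖{0}. Then the profile 𝔴 of w, defined by 𝔴(|x|) = w(x) for x ∈ cl(𝔹₁), is non-decreasing on [0,1]; in particular min_{cl(𝔹₁)} w = w(0). -/
/-!
Write `w = g ∘ ‖·‖` with the even profile `g t = w (t • u)` along a unit vector `u`. Off the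
origin `Δw = g'' + (d - 1) g' / r`, i.e. `(r ^ (d - 1) g')' = r ^ (d - 1) Δw`, so the flux
`φ r = r ^ (d - 1) g' r` increases on `[0, r₀]` and decreases on `[r₀, 1]`. It vanishes at `0`
because `g` is even and at `1` by the Neumann condition, so `φ > 0` on `(0, 1)`: `g' > 0` there
and `g` is increasing on `[0, 1]`.
-/

open MeasureTheory Metric Set Filter

noncomputable section

/-- `E d` is euclidean space `ℝ^d`. -/
abbrev E (d : ℕ) := EuclideanSpace ℝ (Fin d)

/-- The Laplacian of `f`, as the sum of the second partial derivatives. -/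
noncomputable def lap {d : ℕ} (f : E d → ℝ) (x : E d) : ℝ :=
  ∑ i : Fin d, fderiv ℝ (fun y => fderiv ℝ f y (EuclideanSpace.single i 1)) x
    (EuclideanSpace.single i 1)

/-- A radially symmetric function. -/
def Radial {d : ℕ} (f : E d → ℝ) : Prop := ∀ x y : E d, ‖x‖ = ‖y‖ → f x = f y

open Topology

theorem ContDiffOn.hasDerivAt_derivWithin_Icc {f : ℝ → ℝ} {n : WithTop ℕ∞} {a b t : ℝ}
    (hf : ContDiffOn ℝ n f (Icc a b)) (hn : n ≠ 0) (ht : t ∈ Ioo a b) :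
    HasDerivAt f (derivWithin f (Icc a b) t) t := by
  have hnhds : Icc a b ∈ 𝓝 t := Icc_mem_nhds ht.1 ht.2
  rw [derivWithin_of_mem_nhds hnhds]
  exact ((hf.differentiableOn hn t (Ioo_subset_Icc_self ht)).differentiableAt hnhds).hasDerivAt

theorem HasDerivAt.eq_zero_of_even {g : ℝ → ℝ} {a : ℝ} (hg : HasDerivAt g a 0)
    (heven : Function.Even g) : a = 0 := by
  have hrefl := HasDerivAt.comp_const_sub (0 : ℝ) 0 (by rwa [sub_zero])
  rw [show (fun t => g (0 - t)) = g from funext fun t => by rw [zero_sub, heven]] at hrefl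
  linarith [hg.unique hrefl]

theorem HasDerivAt.pow_mul {G : ℝ → ℝ} {G' r : ℝ} (n : ℕ) (hG : HasDerivAt G G' r)
    (hr : r ≠ 0) : HasDerivAt (fun s => s ^ n * G s) (r ^ n * (G' + n * G r / r)) r := by
  refine ((hasDerivAt_pow n r).mul hG).congr_deriv ?_
  rcases n with _ | n
  · simp
  · rw [Nat.add_sub_cancel, pow_succ]
    push_cast
    field_simp
    ring

theorem pos_of_deriv_pos_of_deriv_neg {φ : ℝ → ℝ} {a b c : ℝ} (hac : a ≤ c) (hcb : c ≤ b)
    (hφ : ContinuousOn φ (Icc a b)) (ha : 0 ≤ φ a) (hb : 0 ≤ φ b)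
    (hpos : ∀ x ∈ Ioo a c, 0 < deriv φ x) (hneg : ∀ x ∈ Ioo c b, deriv φ x < 0) :
    ∀ x ∈ Ioo a b, 0 < φ x := by
  intro x hx
  rcases le_or_gt x c with hxc | hcx
  · have := strictMonoOn_of_deriv_pos (convex_Icc a c) (hφ.mono (Icc_subset_Icc_right hcb))
      (by simpa using hpos) (left_mem_Icc.2 hac) ⟨hx.1.le, hxc⟩ hx.1
    linarith
  · have := strictAntiOn_of_deriv_neg (convex_Icc c b) (hφ.mono (Icc_subset_Icc_left hac))
      (by simpa using hneg) ⟨hcx.le, hx.2.le⟩ (right_mem_Icc.2 hcb) hx.2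
    linarith

theorem hasDerivAt_of_differentiableAt_comp_norm {F : Type*} [NormedAddCommGroup F]
    [NormedSpace ℝ F] {g : ℝ → ℝ} {u : F} (hu : ‖u‖ = 1)
    (hdiff : DifferentiableAt ℝ (fun y => g ‖y‖) u) :
    HasDerivAt g (fderiv ℝ (fun y => g ‖y‖) u u) 1 := by
  have hray : HasDerivAt (fun t : ℝ => t • u) u 1 := by
    simpa using (hasDerivAt_id (1 : ℝ)).smul_const u
  refine (hdiff.hasFDerivAt.comp_hasDerivAt_of_eq 1 hray (one_smul ℝ u).symm)
    |>.congr_of_eventuallyEq ?_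
  filter_upwards [lt_mem_nhds one_pos] with t ht
  simp [norm_smul, hu, abs_of_pos ht]

section InnerProductSpace

variable {F : Type*} [NormedAddCommGroup F] [InnerProductSpace ℝ F]

theorem hasFDerivAt_norm_of_ne_zero {x : F} (hx : x ≠ 0) :
    HasFDerivAt (‖·‖) (‖x‖⁻¹ • innerSL ℝ x) x := by
  have hsqrt := (Real.hasDerivAt_sqrt (pow_ne_zero 2 (norm_ne_zero_iff.mpr hx))).comp_hasFDerivAt x
    (hasStrictFDerivAt_norm_sq x).hasFDerivAt
  rw [Real.sqrt_sq (norm_nonneg _)] at hsqrt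
  have hx' : ‖x‖ ≠ 0 := norm_ne_zero_iff.mpr hx
  refine (hsqrt.congr_of_eventuallyEq (.of_forall fun y => ?_)).congr_fderiv ?_
  · simp
  · ext v
    simp only [one_div, mul_inv_rev, smul_apply, coe_innerSL_apply, nsmul_eq_mul, Nat.cast_ofNat,
      smul_eq_mul]
    field_simp

theorem HasDerivAt.comp_norm {g : ℝ → ℝ} {g' : ℝ} {x : F} (hg : HasDerivAt g g' ‖x‖)
    (hx : x ≠ 0) : HasFDerivAt (fun y => g ‖y‖) ((g' / ‖x‖) • innerSL ℝ x) x := by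
  have h := hg.comp_hasFDerivAt x (hasFDerivAt_norm_of_ne_zero hx)
  rwa [smul_smul, ← div_eq_mul_inv] at h

end InnerProductSpace

theorem fderiv_comp_norm_single {d : ℕ} {g : ℝ → ℝ} {g' : ℝ} {y : E d}
    (hg : HasDerivAt g g' ‖y‖) (hy : y ≠ 0) (i : Fin d) :
    fderiv ℝ (fun y => g ‖y‖) y (EuclideanSpace.single i 1) = g' / ‖y‖ * y i := by
  simp [(hg.comp_norm hy).fderiv, EuclideanSpace.inner_single_right]

theorem lap_comp_norm {d : ℕ} {g g' : ℝ → ℝ} {g'' : ℝ} {z : E d} (hz : z ≠ 0)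
    (hg : ∀ᶠ s in 𝓝 ‖z‖, HasDerivAt g (g' s) s) (hg' : HasDerivAt g' g'' ‖z‖) :
    lap (fun y => g ‖y‖) z = g'' + ((d : ℝ) - 1) * g' ‖z‖ / ‖z‖ := by
  have hr : ‖z‖ ≠ 0 := norm_ne_zero_iff.mpr hz
  have hpartial (i : Fin d) : (fun y => fderiv ℝ (fun y => g ‖y‖) y (EuclideanSpace.single i 1))
      =ᶠ[𝓝 z] fun y => g' ‖y‖ / ‖y‖ * y i := by
    filter_upwards [(continuous_norm.tendsto z).eventually hg, eventually_ne_nhds hz]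
      with y hgy hy
    exact fderiv_comp_norm_single hgy hy i
  have hsecond (i : Fin d) :
      fderiv ℝ (fun y => fderiv ℝ (fun y => g ‖y‖) y (EuclideanSpace.single i 1)) z
        (EuclideanSpace.single i 1)
        = (g'' * ‖z‖ - g' ‖z‖) / ‖z‖ ^ 3 * z i ^ 2 + g' ‖z‖ / ‖z‖ := by
    have hquot : HasDerivAt (fun s => g' s / s) ((g'' * ‖z‖ - g' ‖z‖ * 1) / ‖z‖ ^ 2) ‖z‖ :=
      hg'.div (hasDerivAt_id _) hr
    have hcoord : HasFDerivAt (fun y : E d => y i) (EuclideanSpace.proj (𝕜 := ℝ) i) z :=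
      (EuclideanSpace.proj (𝕜 := ℝ) i).hasFDerivAt
    have hprod : HasFDerivAt (fun y : E d => g' ‖y‖ / ‖y‖ * y i) _ z :=
      (hquot.comp_norm hz).mul hcoord
    rw [(hpartial i).fderiv_eq, hprod.fderiv]
    simp only [mul_one, add_apply, smul_apply, PiLp.proj_apply, PiLp.single_eq_same, smul_eq_mul,
      coe_innerSL_apply, EuclideanSpace.inner_single_right, Real.ringHom_apply, one_mul]
    field_simp
    ring
  rw [lap, Finset.sum_congr rfl fun i _ => hsecond i, Finset.sum_add_distrib, ← Finset.mul_sum,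
    ← EuclideanSpace.real_norm_sq_eq z]
  simp only [Finset.sum_const, Finset.card_univ, Fintype.card_fin, nsmul_eq_mul]
  field_simp
  ring

theorem hasDerivAt_radial_flux {d : ℕ} {g : ℝ → ℝ} (hg : ContDiffOn ℝ 2 g (Icc (-1) 1))
    {z : E d} (hz0 : z ≠ 0) (hz1 : ‖z‖ < 1) :
    HasDerivAt (fun r => r ^ (d - 1) * derivWithin g (Icc (-1) 1) r)
      (‖z‖ ^ (d - 1) * lap (fun y => g ‖y‖) z) ‖z‖ := by
  have hd : 1 ≤ d := Nat.one_le_iff_ne_zero.2 (by rintro rfl; exact hz0 (Subsingleton.elim _ _))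
  have hr : ‖z‖ ∈ Ioo (-1) 1 := ⟨by linarith [norm_nonneg z], hz1⟩
  have hG : ContDiffOn ℝ 1 (derivWithin g (Icc (-1) 1)) (Icc (-1) 1) :=
    hg.derivWithin (uniqueDiffOn_Icc (by norm_num)) (by norm_num)
  have hg' : ∀ᶠ s in 𝓝 ‖z‖, HasDerivAt g (derivWithin g (Icc (-1) 1) s) s :=
    Filter.mem_of_superset (Ioo_mem_nhds hr.1 hr.2) fun s hs =>
      hg.hasDerivAt_derivWithin_Icc two_ne_zero hs
  have hG' := hG.hasDerivAt_derivWithin_Icc one_ne_zero hr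
  refine (hG'.pow_mul (d - 1) (norm_ne_zero_iff.2 hz0)).congr_deriv ?_
  rw [lap_comp_norm hz0 hg' hG', Nat.cast_sub hd, Nat.cast_one]

theorem derivWithin_one_eq_zero_of_fderiv_apply_self_eq_zero {d : ℕ} {g : ℝ → ℝ}
    (hg : ContDiffOn ℝ 1 g (Icc (-1) 1)) {u : E d} (hu : ‖u‖ = 1) (hui : ∀ i, u i ≠ 0)
    (hbd : fderiv ℝ (fun y => g ‖y‖) u u = 0) (hlap : lap (fun y => g ‖y‖) u ≠ 0) :
    derivWithin g (Icc (-1) 1) 1 = 0 := by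
  have h1 : (1 : ℝ) ∈ Icc (-1) 1 := right_mem_Icc.2 (by norm_num)
  by_cases hdiff : DifferentiableAt ℝ (fun y => g ‖y‖) u
  · rw [← hbd]
    exact (hasDerivAt_of_differentiableAt_comp_norm hu hdiff).hasDerivWithinAt.derivWithin
      (uniqueDiffOn_Icc (by norm_num) 1 h1)
  -- `w` may fail to be differentiable at the boundary point `u`, and then `hbd` is vacuous. Still,
  -- some `∂ᵢ∂ᵢ w (u) ≠ 0`, so `∂ᵢ w` is continuous at `u`, where it vanishes, while along the ray
  -- it equals `g'(t) uᵢ`.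
  obtain ⟨i, -, hi⟩ := Finset.exists_ne_zero_of_sum_ne_zero hlap
  set wᵢ := fun y : E d => fderiv ℝ (fun y => g ‖y‖) y (EuclideanSpace.single i 1)
  have hcont : ContinuousAt wᵢ u := by
    by_contra hnot
    exact hi (by rw [fderiv_zero_of_not_differentiableAt fun h => hnot h.continuousAt]; rfl)
  have hray : Tendsto (fun t : ℝ => t • u) (𝓝[<] 1) (𝓝 u) :=
    ((continuous_id.smul continuous_const).tendsto' 1 u (one_smul ℝ u)).mono_left
      nhdsWithin_le_nhds
  have hwᵢ_ray : (fun t => derivWithin g (Icc (-1) 1) t * u i) =ᶠ[𝓝[<] 1]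
      wᵢ ∘ fun t => t • u := by
    filter_upwards [Ioo_mem_nhdsLT (by norm_num : (0 : ℝ) < 1)] with t ht
    have hnorm : ‖t • u‖ = t := by simp [norm_smul, hu, abs_of_pos ht.1]
    have hgt := hg.hasDerivAt_derivWithin_Icc one_ne_zero ⟨by linarith [ht.1], ht.2⟩
    simp only [wᵢ, Function.comp_apply]
    rw [fderiv_comp_norm_single (hnorm ▸ hgt) (norm_pos_iff.1 (hnorm.symm ▸ ht.1)) i, hnorm]
    simp only [PiLp.smul_apply, smul_eq_mul]
    field_simp [ht.1.ne']
  have hG : ContinuousWithinAt (derivWithin g (Icc (-1) 1)) (Iio 1) 1 :=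
    (hg.continuousOn_derivWithin (uniqueDiffOn_Icc (by norm_num)) le_rfl 1 h1)
      |>.mono_of_mem_nhdsWithin (Icc_mem_nhdsLT (by norm_num))
  have hlim : wᵢ u = derivWithin g (Icc (-1) 1) 1 * u i :=
    tendsto_nhds_unique ((hcont.tendsto.comp hray).congr' hwᵢ_ray.symm)
      (hG.tendsto.mul_const (u i))
  rw [show wᵢ u = 0 by simp [wᵢ, fderiv_zero_of_not_differentiableAt hdiff]] at hlim
  exact (mul_eq_zero.1 hlim.symm).resolve_right (hui i)

theorem monotoneOn_of_lap_pos_of_lap_neg {d : ℕ} [NeZero d] {g : ℝ → ℝ}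
    (hg : ContDiffOn ℝ 2 g (Icc (-1) 1)) (hG0 : derivWithin g (Icc (-1) 1) 0 = 0)
    (hG1 : derivWithin g (Icc (-1) 1) 1 = 0) {r₀ : ℝ} (hr₀ : r₀ ∈ Ioo 0 1)
    (hpos : ∀ z : E d, ‖z‖ ∈ Ioo 0 r₀ → 0 < lap (fun y => g ‖y‖) z)
    (hneg : ∀ z : E d, ‖z‖ ∈ Ioo r₀ 1 → lap (fun y => g ‖y‖) z < 0) :
    MonotoneOn g (Icc 0 1) := by
  set G := derivWithin g (Icc (-1) 1)
  have hderiv (r : ℝ) (hr : r ∈ Ioo (0 : ℝ) 1) : ∃ z : E d, ‖z‖ = r ∧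
      deriv (fun s => s ^ (d - 1) * G s) r = r ^ (d - 1) * lap (fun y => g ‖y‖) z := by
    obtain ⟨z, rfl⟩ := exists_norm_eq (E d) hr.1.le
    exact ⟨z, rfl, (hasDerivAt_radial_flux hg (norm_pos_iff.1 hr.1) hr.2).deriv⟩
  have hcont : ContinuousOn (fun s => s ^ (d - 1) * G s) (Icc 0 1) :=
    (continuous_pow _).continuousOn.mul
      ((hg.continuousOn_derivWithin (uniqueDiffOn_Icc (by norm_num)) (by norm_num)).mono
        (Icc_subset_Icc_left (by norm_num)))
  have hflux_pos := pos_of_deriv_pos_of_deriv_neg hr₀.1.le hr₀.2.le hcont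
    (by simp [hG0]) (by simp [hG1])
    (fun r hr => by
      obtain ⟨z, hz, h⟩ := hderiv r ⟨hr.1, hr.2.trans hr₀.2⟩
      exact h ▸ mul_pos (pow_pos hr.1 _) (hpos z (hz ▸ hr)))
    (fun r hr => by
      obtain ⟨z, hz, h⟩ := hderiv r ⟨hr₀.1.trans hr.1, hr.2⟩
      exact h ▸ mul_neg_of_pos_of_neg (pow_pos (hr₀.1.trans hr.1) _) (hneg z (hz ▸ hr)))
  refine monotoneOn_of_hasDerivWithinAt_nonneg (f' := G) (convex_Icc 0 1)
    (hg.continuousOn.mono (Icc_subset_Icc_left (by norm_num))) (fun r hr => ?_) fun r hr => ?_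
  all_goals rw [interior_Icc] at hr
  · exact (hg.hasDerivAt_derivWithin_Icc two_ne_zero ⟨by linarith [hr.1], hr.2⟩).hasDerivWithinAt
  · exact (pos_of_mul_pos_right (hflux_pos r hr) (pow_nonneg hr.1.le _)).le

theorem exists_norm_eq_one_forall_ne_zero (d : ℕ) [NeZero d] :
    ∃ u : E d, ‖u‖ = 1 ∧ ∀ i, u i ≠ 0 := by
  set v : E d := WithLp.toLp 2 fun _ => 1
  have hv : v ≠ 0 := fun h => one_ne_zero (congrArg (fun x : E d => x 0) h)
  refine ⟨‖v‖⁻¹ • v, norm_smul_inv_norm hv, fun i => ?_⟩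
  simpa [v] using hv

theorem Radial.eq_comp_norm {d : ℕ} {w : E d → ℝ} (hw : Radial w) {u : E d} (hu : ‖u‖ = 1) :
    w = fun y => w (‖y‖ • u) :=
  funext fun y => hw _ _ (by simp [norm_smul, hu])

theorem stmt4_general (d : ℕ) (w : E d → ℝ)
    (hreg : ContDiffOn ℝ 2 w (closedBall (0 : E d) 1))
    (hrad : Radial w)
    (hbd : ∀ x ∈ sphere (0 : E d) 1, fderiv ℝ w x x = 0)
    (r₀ : ℝ) (hr₀ : r₀ ∈ Ioo (0 : ℝ) 1)
    (hneg : ∀ x ∈ closedBall (0 : E d) 1 \ closedBall (0 : E d) r₀, lap w x < 0)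
    (hpos : ∀ x ∈ ball (0 : E d) r₀ \ {0}, 0 < lap w x) :
    (∀ x ∈ closedBall (0 : E d) 1, ∀ y ∈ closedBall (0 : E d) 1,
      ‖x‖ ≤ ‖y‖ → w x ≤ w y) ∧
    ∀ x ∈ closedBall (0 : E d) 1, w 0 ≤ w x := by
  rcases eq_or_ne d 0 with rfl | hd
  · have hw (x y : E 0) : w x ≤ w y :=
      (hrad x y (by simp [Subsingleton.elim x 0, Subsingleton.elim y 0])).le
    exact ⟨fun x _ y _ _ => hw x y, fun x _ => hw 0 x⟩
  have : NeZero d := ⟨hd⟩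
  obtain ⟨u, hu, hui⟩ := exists_norm_eq_one_forall_ne_zero d
  set g : ℝ → ℝ := fun t => w (t • u)
  have hwg : w = fun y => g ‖y‖ := hrad.eq_comp_norm hu
  have hg : ContDiffOn ℝ 2 g (Icc (-1) 1) :=
    hreg.comp (by fun_prop : ContDiff ℝ 2 fun t : ℝ => t • u).contDiffOn
      fun t ht => by simpa [norm_smul, hu, abs_le] using ht
  have hG0 : derivWithin g (Icc (-1) 1) 0 = 0 :=
    (hg.hasDerivAt_derivWithin_Icc two_ne_zero (by norm_num)).eq_zero_of_even
      fun t => hrad _ _ (by simp [norm_smul, hu])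
  have hG1 : derivWithin g (Icc (-1) 1) 1 = 0 :=
    derivWithin_one_eq_zero_of_fderiv_apply_self_eq_zero (hg.of_le one_le_two) hu hui
      (hwg ▸ hbd u (by simp [hu])) (hwg ▸ (hneg u (by simp [hu, hr₀.2])).ne)
  have hmono := monotoneOn_of_lap_pos_of_lap_neg hg hG0 hG1 hr₀
    (fun z hz => hwg ▸ hpos z (by simp [hz.2, ← norm_pos_iff, hz.1]))
    (fun z hz => hwg ▸ hneg z (by simp [hz.2.le, hz.1]))
  have hw : ∀ x ∈ closedBall (0 : E d) 1, ∀ y ∈ closedBall (0 : E d) 1,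
      ‖x‖ ≤ ‖y‖ → w x ≤ w y := by
    rw [hwg]
    exact fun x hx y hy =>
      hmono ⟨norm_nonneg x, by simpa using hx⟩ ⟨norm_nonneg y, by simpa using hy⟩
  exact ⟨hw, fun x hx => hw 0 (mem_closedBall_self zero_le_one) x hx (by simp)⟩

/-- Let `w ∈ C²(cl 𝔹₁)` be radially symmetric with `∂_ν w = 0` on
`∂𝔹₁`, and suppose there is `r₀ ∈ (0,1)` such that `Δw < 0` on `cl 𝔹₁ ∖ cl 𝔹_{r₀}`
and `Δw > 0` on `𝔹_{r₀} ∖ {0}`. Then the profile of `w` is non-decreasing on `[0,1]`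
(expressed here as monotonicity of `w` in the norm of its argument); in particular the
minimum of `w` over `cl 𝔹₁` is attained at the origin. -/
theorem stmt4 (d : ℕ) (hd : d = 1 ∨ d = 2) (w : E d → ℝ)
    (hreg : ContDiffOn ℝ 2 w (closedBall (0 : E d) 1))
    (hrad : Radial w)
    (hbd : ∀ x ∈ sphere (0 : E d) 1, fderiv ℝ w x x = 0)
    (r₀ : ℝ) (hr₀ : r₀ ∈ Ioo (0 : ℝ) 1)
    (hneg : ∀ x ∈ closedBall (0 : E d) 1 \ closedBall (0 : E d) r₀, lap w x < 0)
    (hpos : ∀ x ∈ ball (0 : E d) r₀ \ {0}, 0 < lap w x) :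
    (∀ x ∈ closedBall (0 : E d) 1, ∀ y ∈ closedBall (0 : E d) 1,
      ‖x‖ ≤ ‖y‖ → w x ≤ w y) ∧
    ∀ x ∈ closedBall (0 : E d) 1, w 0 ≤ w x :=
  stmt4_general d w hreg hrad hbd r₀ hr₀ hneg hpos
end
end

section
/- Let u : 𝔹₁ → ℝ be measurable with u(x) > −1 for almost every x ∈ 𝔹₁, and suppose that (3u² + u)(1+u)^{−3} is integrable on 𝔹₁ with ∫_{𝔹₁} (3u(x)² + u(x))(1+u(x))^{−3} dx ≤ 0. Then ∫_{𝔹₁} (1+u(x))^{−3} dx ≤ 10 |𝔹₁|. -/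
open MeasureTheory Metric Set

noncomputable section

/-!
Pointwise, `(1+u)⁻³ ≤ (3u² + u)(1+u)⁻³ + 9` whenever `u > -1`. Integrating over the ball and
using `∫ (3u² + u)(1+u)⁻³ ≤ 0` gives `∫ (1+u)⁻³ ≤ 9 |𝔹₁|`.
-/

-- `9` is the least constant that works: equality holds at `u = -2/3`.
theorem inv_one_add_pow_three_le {u : ℝ} (hu : -1 < u) :
    ((1 + u)⁻¹) ^ 3 ≤ (3 * u ^ 2 + u) * ((1 + u)⁻¹) ^ 3 + 9 := by
  have hpos : 0 < 1 + u := by linarith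
  have hdiff : (3 * u ^ 2 + u) * ((1 + u)⁻¹) ^ 3 + 9 - ((1 + u)⁻¹) ^ 3
      = (2 + u) * (3 * u + 2) ^ 2 / (1 + u) ^ 3 := by
    field_simp
    ring
  rw [← sub_nonneg, hdiff]
  have : 0 < 2 + u := by linarith
  positivity

theorem lintegral_ofReal_le_of_ae_le_add_const {α : Type*} [MeasurableSpace α] {μ : Measure α}
    [IsFiniteMeasure μ] {f h : α → ℝ} {C : ℝ} (hh : Integrable h μ) (hh_nonpos : ∫ x, h x ∂μ ≤ 0)
    (hf_nonneg : 0 ≤ᵐ[μ] f) (hfh : ∀ᵐ x ∂μ, f x ≤ h x + C) :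
    ∫⁻ x, ENNReal.ofReal (f x) ∂μ ≤ ENNReal.ofReal C * μ univ := by
  have hhC : Integrable (fun x => h x + C) μ := hh.add (integrable_const C)
  have hhC_nonneg : 0 ≤ᵐ[μ] fun x => h x + C := by
    filter_upwards [hf_nonneg, hfh] with x hf hfx using hf.trans hfx
  calc ∫⁻ x, ENNReal.ofReal (f x) ∂μ
      ≤ ∫⁻ x, ENNReal.ofReal (h x + C) ∂μ :=
        lintegral_mono_ae (hfh.mono fun x hx => ENNReal.ofReal_le_ofReal hx)
    _ = ENNReal.ofReal (∫ x, h x + C ∂μ) := (ofReal_integral_eq_lintegral_ofReal hhC hhC_nonneg).symm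
    _ ≤ ENNReal.ofReal (C * μ.real univ) := by
        gcongr
        rw [integral_add hh (integrable_const C), integral_const, smul_eq_mul]
        linarith
    _ = ENNReal.ofReal C * μ univ := by
        rw [ENNReal.ofReal_mul' measureReal_nonneg, measureReal_def,
          ENNReal.ofReal_toReal (measure_ne_top μ univ)]

theorem stmt9_general (d : ℕ) (u : E d → ℝ)
    (hgt : ∀ᵐ x ∂(volume.restrict (ball (0 : E d) 1)), -1 < u x)
    (hint : IntegrableOn (fun x => (3 * u x ^ 2 + u x) * ((1 + u x)⁻¹) ^ 3)
      (ball (0 : E d) 1))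
    (hle : (∫ x in ball (0 : E d) 1, (3 * u x ^ 2 + u x) * ((1 + u x)⁻¹) ^ 3) ≤ 0) :
    (∫⁻ x in ball (0 : E d) 1, ENNReal.ofReal (((1 + u x)⁻¹) ^ 3))
      ≤ 10 * volume (ball (0 : E d) 1) := by
  have : IsFiniteMeasure (volume.restrict (ball (0 : E d) 1)) :=
    isFiniteMeasure_restrict.2 measure_ball_lt_top.ne
  have hnonneg : ∀ᵐ x ∂(volume.restrict (ball (0 : E d) 1)), 0 ≤ ((1 + u x)⁻¹) ^ 3 :=
    hgt.mono fun x hx => pow_nonneg (inv_nonneg.2 (by linarith)) 3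
  calc (∫⁻ x in ball (0 : E d) 1, ENNReal.ofReal (((1 + u x)⁻¹) ^ 3))
      ≤ ENNReal.ofReal 9 * volume.restrict (ball (0 : E d) 1) univ :=
        lintegral_ofReal_le_of_ae_le_add_const hint hle hnonneg
          (hgt.mono fun x hx => inv_one_add_pow_three_le hx)
    _ ≤ 10 * volume (ball (0 : E d) 1) := by
        rw [Measure.restrict_apply_univ, ENNReal.ofReal_ofNat]
        gcongr
        norm_num

/-- Let `u : 𝔹₁ → ℝ` be measurable with `u > −1` a.e. in `𝔹₁`, and
suppose `(3u² + u)(1+u)^{−3}` is integrable on `𝔹₁` with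
`∫_{𝔹₁} (3u² + u)(1+u)^{−3} ≤ 0`. Then `∫_{𝔹₁} (1+u)^{−3} ≤ 10 |𝔹₁|`. -/
theorem stmt9 (d : ℕ) (hd : d = 1 ∨ d = 2) (u : E d → ℝ) (hmeas : Measurable u)
    (hgt : ∀ᵐ x ∂(volume.restrict (ball (0 : E d) 1)), -1 < u x)
    (hint : IntegrableOn (fun x => (3 * u x ^ 2 + u x) * ((1 + u x)⁻¹) ^ 3)
      (ball (0 : E d) 1))
    (hle : (∫ x in ball (0 : E d) 1, (3 * u x ^ 2 + u x) * ((1 + u x)⁻¹) ^ 3) ≤ 0) :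
    (∫⁻ x in ball (0 : E d) 1, ENNReal.ofReal (((1 + u x)⁻¹) ^ 3))
      ≤ 10 * volume (ball (0 : E d) 1) :=
  stmt9_general d u hgt hint hle
end
end
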